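/- arXiv:2201.06408 — 14 statements merged into one kernel-verified Lean document; each statement's English description precedes it below -/
import Mathlib

section
/- Let R be a commutative ring. An ideal I of R is a principal element of the quantale Idl(R) — that is, I is both meet principal (I·((J : I) ⊓ B) = J ⊓ (I·B) for all ideals J, B) and join principal ((((I·J) ⊔ A) : I) = J ⊔ (A : I) for all ideals J, A) — if and only if I is finitely generated and locally principal, i.e. I is finitely generated and there exist finitely many elements f₁, …, fₙ ∈ R generating the unit ideal such that for each i the image of I under the localization map R → R[fᵢ⁻¹] generates a principal ideal of R[fᵢ⁻¹]. -/
/-!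
Once `I` is finitely generated, both identities are local. Localization commutes with finite
intersections and, because `I` is finitely generated, with the colon ideals `(J : I)`. So the
meet and join principal identities for `I` may be checked in the localizations `R[fᵢ⁻¹]`, where
`I` becomes principal, and a principal ideal `(a)` satisfies both identities directly.

Conversely, meet principality gives `I · ((x) : I) = (x)` for `x ∈ I`, and join principality
(with `A = 0`) turns `I ≤ I · C` into `C + (0 : I) = R`. Take `C = Σ_{x ∈ I} ((x) : I)`, which
contains `(0 : I) = ((0) : I)`. This gives finitely many `xᵢ ∈ I` and `cᵢ ∈ ((xᵢ) : I)` with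
`Σ cᵢ = 1`. Then `I = Σ cᵢ I ⊆ (x₁, …, xₙ)`, and inverting `cᵢ` turns `I` into `(xᵢ)`.
-/

open Submodule

namespace Ideal

variable {R : Type*}

section CommSemiring

variable [CommSemiring R]

def IsMeetPrincipal (I : Ideal R) : Prop :=
  ∀ J B : Ideal R, I * (J.colon I ⊓ B) = J ⊓ (I * B)

def IsJoinPrincipal (I : Ideal R) : Prop :=
  ∀ J A : Ideal R, (I * J ⊔ A).colon I = J ⊔ A.colon I

section Colon

variable {I J K : Ideal R}

theorem le_colon_iff_mul_le : J ≤ K.colon I ↔ I * J ≤ K := by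
  rw [mul_le, SetLike.le_def]
  simp only [mem_colon, smul_eq_mul, SetLike.mem_coe]
  exact ⟨fun h r hr s hs => mul_comm s r ▸ h hs r hr, fun h s hs r hr => mul_comm r s ▸ h r hr s hs⟩

theorem mul_colon_le (I J : Ideal R) : I * J.colon I ≤ J :=
  le_colon_iff_mul_le.1 le_rfl

theorem mul_colon_inf_le (I J B : Ideal R) : I * (J.colon I ⊓ B) ≤ J ⊓ I * B :=
  le_inf ((mul_mono_right inf_le_left).trans (mul_colon_le I J)) (mul_mono_right inf_le_right)

theorem sup_colon_le (I J A : Ideal R) : J ⊔ A.colon I ≤ (I * J ⊔ A).colon I :=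
  sup_le (le_colon_iff_mul_le.2 le_sup_left) (colon_mono le_sup_right le_rfl)

theorem isMeetPrincipal_iff :
    I.IsMeetPrincipal ↔ ∀ J B : Ideal R, J ⊓ I * B ≤ I * (J.colon I ⊓ B) :=
  forall₂_congr fun J B => (mul_colon_inf_le I J B).ge_iff_eq.symm

theorem isJoinPrincipal_iff :
    I.IsJoinPrincipal ↔ ∀ J A : Ideal R, (I * J ⊔ A).colon I ≤ J ⊔ A.colon I :=
  forall₂_congr fun J A => (sup_colon_le I J A).ge_iff_eq'.symm

end Colon

theorem isMeetPrincipal_span_singleton (a : R) : (span {a}).IsMeetPrincipal := by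
  refine isMeetPrincipal_iff.2 fun J B x ⟨hxJ, hxB⟩ => ?_
  obtain ⟨b, hb, rfl⟩ := mem_span_singleton_mul.1 hxB
  have hbJ : b ∈ J.colon (span {a}) := mem_colon_span_singleton.2 (mul_comm b a ▸ hxJ)
  exact mul_mem_mul (mem_span_singleton_self a) ⟨hbJ, hb⟩

theorem isMeetPrincipal_of_isPrincipal {I : Ideal R} (h : I.IsPrincipal) : I.IsMeetPrincipal := by
  obtain ⟨a, rfl⟩ := h.principal
  exact isMeetPrincipal_span_singleton a

section Localization

variable {S : Type*} [CommSemiring S] [Algebra R S]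

theorem map_colon_singleton (M : Submonoid R) [IsLocalization M S] (J : Ideal R) (t : R) :
    (J.colon {t}).map (algebraMap R S) = (J.map (algebraMap R S)).colon {algebraMap R S t} := by
  ext z
  obtain ⟨x, s, rfl⟩ := IsLocalization.exists_mk'_eq M z
  rw [mem_colon_singleton, smul_eq_mul, mul_comm, IsLocalization.mul_mk'_eq_mk'_of_mul,
    IsLocalization.mk'_mem_map_algebraMap_iff, IsLocalization.mk'_mem_map_algebraMap_iff]
  simp only [mem_colon_singleton, smul_eq_mul, mul_assoc, mul_comm t]

theorem map_colon_finset (M : Submonoid R) [IsLocalization M S] (J : Ideal R) (s : Finset R) :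
    (J.colon (s : Set R)).map (algebraMap R S) =
      (J.map (algebraMap R S)).colon (algebraMap R S '' s) := by
  classical
  induction s using Finset.induction_on with
  | empty => simp only [Finset.coe_empty, colon_empty, Set.image_empty, map_top]
  | insert t s _ ih =>
    rw [Finset.coe_insert, Set.insert_eq, colon_union, IsLocalization.map_inf M,
      map_colon_singleton M, ih, Set.image_union, Set.image_singleton, colon_union]

theorem map_colon (M : Submonoid R) [IsLocalization M S] {I : Ideal R} (hI : I.FG) (J : Ideal R) :
    (J.colon I).map (algebraMap R S) = (J.map (algebraMap R S)).colon (I.map (algebraMap R S)) := by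
  obtain ⟨s, rfl⟩ := hI
  rw [colon_span, map_span, Ideal.colon_span, map_colon_finset M]

end Localization

section Away

open Localization

theorem le_of_map_away_le {ι : Type*} [Finite ι] {f : ι → R} (hf : span (Set.range f) = ⊤)
    {K L : Ideal R}
    (h : ∀ i, K.map (algebraMap R (Away (f i))) ≤ L.map (algebraMap R (Away (f i)))) : K ≤ L := by
  have hS : span ((Set.finite_range f).toFinset : Set R) = ⊤ := by simpa using hf
  rw [IsLocalization.ideal_eq_iInf_under_map_away hS L]
  refine le_iInf₂ fun g hg => map_le_iff_le_comap.1 ?_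
  obtain ⟨i, rfl⟩ := (Set.finite_range f).mem_toFinset.1 hg
  exact h i

variable {ι : Type*} [Finite ι] {f : ι → R} {I : Ideal R}

theorem isMeetPrincipal_of_map_away (hf : span (Set.range f) = ⊤) (hI : I.FG)
    (h : ∀ i, (I.map (algebraMap R (Away (f i)))).IsMeetPrincipal) : I.IsMeetPrincipal := by
  refine isMeetPrincipal_iff.2 fun J B => le_of_map_away_le hf fun i => ?_
  let φ := algebraMap R (Away (f i))
  calc (J ⊓ I * B).map φ ≤ J.map φ ⊓ I.map φ * B.map φ := Ideal.map_mul φ I B ▸ map_inf_le φ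
    _ = I.map φ * ((J.map φ).colon (I.map φ) ⊓ B.map φ) := (h i _ _).symm
    _ = (I * (J.colon I ⊓ B)).map φ := by
      rw [Ideal.map_mul, IsLocalization.map_inf (.powers (f i)), map_colon (.powers (f i)) hI]

theorem isJoinPrincipal_of_map_away (hf : span (Set.range f) = ⊤) (hI : I.FG)
    (h : ∀ i, (I.map (algebraMap R (Away (f i)))).IsJoinPrincipal) : I.IsJoinPrincipal := by
  refine isJoinPrincipal_iff.2 fun J A => le_of_map_away_le hf fun i => le_of_eq ?_
  let φ := algebraMap R (Away (f i))
  calc ((I * J ⊔ A).colon I).map φ = (I.map φ * J.map φ ⊔ A.map φ).colon (I.map φ) := by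
        rw [map_colon (.powers (f i)) hI, map_sup, Ideal.map_mul]
    _ = J.map φ ⊔ (A.map φ).colon (I.map φ) := h i _ _
    _ = (J ⊔ A.colon I).map φ := by rw [map_sup, map_colon (.powers (f i)) hI]

theorem map_away_eq_span_singleton {g c : R} (hg : g ∈ I) (hc : c ∈ (span {g}).colon I) :
    I.map (algebraMap R (Away c)) = span {algebraMap R (Away c) g} := by
  let φ := algebraMap R (Away c)
  refine le_antisymm ?_ ((span_singleton_le_iff_mem _).2 (mem_map_of_mem φ hg))
  calc I.map φ = span {φ c} * I.map φ := by
        rw [span_singleton_eq_top.2 (IsLocalization.Away.algebraMap_isUnit c), top_mul]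
    _ = (I * span {c}).map φ := by rw [Ideal.map_mul, map_span, Set.image_singleton, mul_comm]
    _ ≤ (span {g}).map φ := map_mono (le_colon_iff_mul_le.1 ((span_singleton_le_iff_mem _).2 hc))
    _ = span {φ g} := by rw [map_span, Set.image_singleton]

end Away

section Converse

variable {I : Ideal R}

theorem IsMeetPrincipal.mul_colon_of_le (h : I.IsMeetPrincipal) {J : Ideal R} (hJ : J ≤ I) :
    I * J.colon I = J := by
  simpa [inf_eq_left.2 hJ] using h J ⊤

theorem IsJoinPrincipal.sup_colon_bot_eq_top (h : I.IsJoinPrincipal) {C : Ideal R}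
    (hC : I ≤ I * C) : C ⊔ (⊥ : Ideal R).colon I = ⊤ := by
  rw [← h C ⊥, sup_bot_eq]
  exact (colon_eq_top_iff_subset _).2 hC

theorem iSup_colon_span_singleton_eq_top (hm : I.IsMeetPrincipal) (hj : I.IsJoinPrincipal) :
    ⨆ x : I, (span {(x : R)}).colon I = ⊤ := by
  set C := ⨆ x : I, (span {(x : R)}).colon I
  have hIC : I ≤ I * C := fun x hx => by
    have hx' : x ∈ I * (span {x}).colon I := by
      rw [hm.mul_colon_of_le ((span_singleton_le_iff_mem I).2 hx)]
      exact mem_span_singleton_self x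
    exact mul_mono_right (le_iSup (fun y : I => (span {(y : R)}).colon I) ⟨x, hx⟩) hx'
  have hann : (⊥ : Ideal R).colon I ≤ C := by
    simpa using le_iSup (fun y : I => (span {(y : R)}).colon I) 0
  rw [← sup_eq_left.2 hann]
  exact hj.sup_colon_bot_eq_top hIC

variable {ι : Type*} [Fintype ι] {g c : ι → R}

theorem eq_span_range_of_sum_eq_one (hg : ∀ i, g i ∈ I) (hc : ∀ i, c i ∈ (span {g i}).colon I)
    (hsum : ∑ i, c i = 1) : I = span (Set.range g) := by
  refine le_antisymm (fun x hx => ?_) (span_le.2 (Set.range_subset_iff.2 hg))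
  rw [← one_mul x, ← hsum, Finset.sum_mul]
  refine Submodule.sum_mem _ fun i _ => ?_
  exact span_mono (Set.singleton_subset_iff.2 (Set.mem_range_self i)) (mem_colon.1 (hc i) x hx)

theorem exists_cover_map_away_isPrincipal (hg : ∀ i, g i ∈ I)
    (hc : ∀ i, c i ∈ (span {g i}).colon I) (hsum : ∑ i, c i = 1) :
    ∃ (n : ℕ) (f : Fin n → R), span (Set.range f) = ⊤ ∧
      ∀ i, (I.map (algebraMap R (Localization.Away (f i)))).IsPrincipal := by
  let e := Fintype.equivFin ι
  refine ⟨Fintype.card ι, c ∘ e.symm, ?_,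
    fun i => ⟨⟨_, map_away_eq_span_singleton (hg _) (hc _)⟩⟩⟩
  rw [eq_top_iff_one, ← hsum]
  exact Submodule.sum_mem _ fun i _ => subset_span ⟨e i, by simp⟩

end Converse

end CommSemiring

section CommRing

variable [CommRing R]

theorem isJoinPrincipal_span_singleton (a : R) : (span {a}).IsJoinPrincipal := by
  refine isJoinPrincipal_iff.2 fun J A x hx => ?_
  obtain ⟨y, hy, z, hz, hyz⟩ := mem_sup.1 (mem_colon_span_singleton.1 hx)
  obtain ⟨j, hj, rfl⟩ := mem_span_singleton_mul.1 hy
  have hxj : x - j ∈ A.colon (span {a}) :=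
    mem_colon_span_singleton.2 (by rwa [sub_mul, ← hyz, mul_comm j, add_sub_cancel_left])
  simpa using add_mem_sup hj hxj

theorem isJoinPrincipal_of_isPrincipal {I : Ideal R} (h : I.IsPrincipal) : I.IsJoinPrincipal := by
  obtain ⟨a, rfl⟩ := h.principal
  exact isJoinPrincipal_span_singleton a

end CommRing

end Ideal

/-- An ideal `I` of a commutative ring `R` is a principal element of the
quantale `Idl(R)` (meet principal and join principal, with residuation given by the colon
ideal) if and only if `I` is finitely generated and locally principal. -/
theorem principal_element_iff_fg_locally_principal {R : Type*} [CommRing R] (I : Ideal R) :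
    ((∀ J B : Ideal R, I * (J.colon I ⊓ B) = J ⊓ (I * B)) ∧
      (∀ J A : Ideal R, (I * J ⊔ A).colon I = J ⊔ A.colon I)) ↔
    (I.FG ∧ ∃ (n : ℕ) (f : Fin n → R), Ideal.span (Set.range f) = ⊤ ∧
      ∀ i : Fin n,
        (I.map (algebraMap R (Localization.Away (f i)))).IsPrincipal) := by
  change I.IsMeetPrincipal ∧ I.IsJoinPrincipal ↔ _
  constructor
  · rintro ⟨hm, hj⟩
    obtain ⟨c, hc, hsum⟩ := (Submodule.mem_iSup_iff_exists_finsupp _ 1).1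
      ((Ideal.iSup_colon_span_singleton_eq_top hm hj).symm ▸ Submodule.mem_top)
    let g : c.support → R := fun x => (x : I)
    have hg : ∀ x, g x ∈ I := fun x => (x : I).2
    have hsum' : ∑ x : c.support, c x = 1 := by rwa [Finset.sum_coe_sort]
    refine ⟨?_, Ideal.exists_cover_map_away_isPrincipal hg (fun x => hc x) hsum'⟩
    rw [Ideal.eq_span_range_of_sum_eq_one hg (fun x => hc x) hsum']
    exact Submodule.fg_span (Set.finite_range g)
  · rintro ⟨hI, n, f, hf, hP⟩
    exact ⟨Ideal.isMeetPrincipal_of_map_away hf hI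
        fun i => Ideal.isMeetPrincipal_of_isPrincipal (hP i),
      Ideal.isJoinPrincipal_of_map_away hf hI fun i => Ideal.isJoinPrincipal_of_isPrincipal (hP i)⟩
end

section
/- Let R be a commutative ring and f ∈ R. Then the principal ideal (f) generated by f is a principal element of Idl(R): for all ideals J and B of R one has (f)·((J : (f)) ⊓ B) = J ⊓ ((f)·B), and for all ideals J and A one has (((f)·J) ⊔ A) : (f) = J ⊔ (A : (f)). -/
/-- For a commutative ring `R` and `f ∈ R`, the principal ideal `(f)` is a
principal element of the quantale `Idl(R)`: it is both meet principal and join principal. -/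
theorem span_singleton_principal_element {R : Type*} [CommRing R] (f : R) :
    (∀ J B : Ideal R,
      Ideal.span {f} * (J.colon (Ideal.span {f}) ⊓ B) = J ⊓ (Ideal.span {f} * B)) ∧
    (∀ J A : Ideal R,
      (Ideal.span {f} * J ⊔ A).colon (Ideal.span {f}) = J ⊔ A.colon (Ideal.span {f})) := by
  constructor
  · intro J B
    apply le_antisymm
    · intro x hx
      rw [Ideal.mem_span_singleton_mul] at hx
      obtain ⟨z, hz, rfl⟩ := hx
      obtain ⟨hz1, hz2⟩ := Submodule.mem_inf.mp hz
      rw [Ideal.mem_colon_span_singleton] at hz1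
      rw [mul_comm] at hz1
      exact Submodule.mem_inf.mpr ⟨hz1, Ideal.mem_span_singleton_mul.mpr ⟨z, hz2, rfl⟩⟩
    · intro x hx
      obtain ⟨hxJ, hxB⟩ := Submodule.mem_inf.mp hx
      rw [Ideal.mem_span_singleton_mul] at hxB ⊢
      obtain ⟨z, hz, rfl⟩ := hxB
      refine ⟨z, Submodule.mem_inf.mpr ⟨Ideal.mem_colon_span_singleton.mpr (by rwa [mul_comm] at hxJ), hz⟩, rfl⟩
  · intro J A
    apply le_antisymm
    · intro x hx
      rw [Ideal.mem_colon_span_singleton] at hx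
      obtain ⟨y, hy, a, ha, hya⟩ := Submodule.mem_sup.mp hx
      rw [Ideal.mem_span_singleton_mul] at hy
      obtain ⟨j, hj, rfl⟩ := hy
      refine Submodule.mem_sup.mpr ⟨j, hj, x - j, ?_, by ring⟩
      rw [Ideal.mem_colon_span_singleton, sub_mul]
      have : x * f - j * f = a := by rw [← hya]; ring
      rwa [this]
    · apply sup_le
      · intro x hx
        rw [Ideal.mem_colon_span_singleton]
        exact Ideal.mem_sup_left (Ideal.mem_span_singleton_mul.mpr ⟨x, hx, mul_comm f x⟩)
      · intro x hx
        rw [Ideal.mem_colon_span_singleton] at hx ⊢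
        exact Ideal.mem_sup_right hx
end

section
/- Let Q be a two-sided commutative quantale. If k and l are both meet principal elements of Q, then k·l is meet principal; if k and l are both join principal, then k·l is join principal. Consequently, the product of two principal elements is principal. -/
/-- The residuation in a quantale: `qres k x` is the largest `y` with `k * y ≤ x`. -/
def qres {Q : Type*} [CompleteLattice Q] [Mul Q] (k x : Q) : Q :=
  sSup {y | k * y ≤ x}

/-- `k` is a meet principal element of the quantale `Q`. -/
def MeetPrincipal {Q : Type*} [CompleteLattice Q] [Mul Q] (k : Q) : Prop :=
  ∀ x b : Q, k * (qres k x ⊓ b) = x ⊓ (k * b)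

/-- `k` is a join principal element of the quantale `Q`. -/
def JoinPrincipal {Q : Type*} [CompleteLattice Q] [Mul Q] (k : Q) : Prop :=
  ∀ x a : Q, qres k (k * x ⊔ a) = x ⊔ qres k a

private lemma qmul_mono {Q : Type*} [CompleteLattice Q] [CommMonoid Q]
    (hdist : ∀ (a : Q) (S : Set Q), a * sSup S = ⨆ s ∈ S, a * s)
    (k : Q) {a b : Q} (h : a ≤ b) : k * a ≤ k * b := by
  have hb : b = sSup {a, b} := by
    rw [sSup_pair, sup_eq_right.mpr h]
  rw [hb, hdist]
  exact le_biSup _ (Set.mem_insert _ _)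

private lemma qmul_le_iff {Q : Type*} [CompleteLattice Q] [CommMonoid Q]
    (hdist : ∀ (a : Q) (S : Set Q), a * sSup S = ⨆ s ∈ S, a * s)
    (k x y : Q) : k * y ≤ x ↔ y ≤ qres k x := by
  constructor
  · intro h
    exact le_sSup h
  · intro h
    have h2 : k * qres k x ≤ x := by
      rw [qres, hdist]
      exact iSup₂_le fun s hs => hs
    exact le_trans (qmul_mono hdist k h) h2

private lemma qres_mul {Q : Type*} [CompleteLattice Q] [CommMonoid Q]
    (hdist : ∀ (a : Q) (S : Set Q), a * sSup S = ⨆ s ∈ S, a * s)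
    (k l x : Q) : qres (k * l) x = qres l (qres k x) := by
  have h : ∀ y : Q, y ≤ qres (k * l) x ↔ y ≤ qres l (qres k x) := fun y => by
    rw [← qmul_le_iff hdist, ← qmul_le_iff hdist, ← qmul_le_iff hdist, ← mul_assoc]
  exact le_antisymm ((h _).mp le_rfl) ((h _).mpr le_rfl)

/-- in a two-sided commutative quantale, meet principal elements are closed
under multiplication, join principal elements are closed under multiplication, and hence
so are principal elements. -/
theorem principal_elements_closed_under_mul {Q : Type*} [CompleteLattice Q] [CommMonoid Q]
    (hdist : ∀ (a : Q) (S : Set Q), a * sSup S = ⨆ s ∈ S, a * s)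
    (htwo : (1 : Q) = ⊤) (k l : Q) :
    (MeetPrincipal k → MeetPrincipal l → MeetPrincipal (k * l)) ∧
    (JoinPrincipal k → JoinPrincipal l → JoinPrincipal (k * l)) ∧
    ((MeetPrincipal k ∧ JoinPrincipal k) → (MeetPrincipal l ∧ JoinPrincipal l) →
      (MeetPrincipal (k * l) ∧ JoinPrincipal (k * l))) := by
  have hmeet : MeetPrincipal k → MeetPrincipal l → MeetPrincipal (k * l) := by
    intro hk hl x b
    calc k * l * (qres (k * l) x ⊓ b)
        = k * (l * (qres l (qres k x) ⊓ b)) := by rw [qres_mul hdist, mul_assoc]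
      _ = k * (qres k x ⊓ l * b) := by rw [hl]
      _ = x ⊓ (k * (l * b)) := by rw [hk]
      _ = x ⊓ (k * l * b) := by rw [mul_assoc]
  have hjoin : JoinPrincipal k → JoinPrincipal l → JoinPrincipal (k * l) := by
    intro hk hl x a
    calc qres (k * l) (k * l * x ⊔ a)
        = qres l (qres k (k * (l * x) ⊔ a)) := by rw [qres_mul hdist, mul_assoc]
      _ = qres l (l * x ⊔ qres k a) := by rw [hk]
      _ = x ⊔ qres l (qres k a) := by rw [hl]
      _ = x ⊔ qres (k * l) a := by rw [qres_mul hdist]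
  exact ⟨hmeet, hjoin, fun hk hl => ⟨hmeet hk.1 hl.1, hjoin hk.2 hl.2⟩⟩
end

section
/- Let Q be a two-sided commutative quantale whose underlying lattice is modular. If k ∈ Q is weak principal (both weak meet principal and weak join principal), then k is principal (both meet principal and join principal). -/
/-- in a two-sided commutative quantale whose underlying lattice is modular,
every weak principal element (weak meet principal and weak join principal) is principal
(meet principal and join principal). -/
theorem weak_principal_implies_principal_of_modular {Q : Type*} [CompleteLattice Q]
    [CommMonoid Q]
    (hdist : ∀ (a : Q) (S : Set Q), a * sSup S = ⨆ s ∈ S, a * s)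
    (htwo : (1 : Q) = ⊤)
    (hmod : ∀ a b x : Q, a ≤ b → (x ⊓ b) ⊔ a = (x ⊔ a) ⊓ b)
    (k : Q)
    (hwm : ∀ x : Q, k * qres k x = x ⊓ k)
    (hwj : ∀ x : Q, qres k (k * x) = x ⊔ qres k ⊥) :
    (∀ x b : Q, k * (qres k x ⊓ b) = x ⊓ (k * b)) ∧
    (∀ x a : Q, qres k (k * x ⊔ a) = x ⊔ qres k a) := by
  -- multiplication distributes over binary sup
  have hsup : ∀ a b c : Q, a * (b ⊔ c) = a * b ⊔ a * c := by
    intro a b c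
    have h := hdist a {b, c}
    simpa [sSup_pair, iSup_or, iSup_sup_eq, iSup_iSup_eq_left] using h
  -- multiplication is monotone in the right argument
  have hmono : ∀ a : Q, ∀ {b c : Q}, b ≤ c → a * b ≤ a * c := by
    intro a b c hbc
    have : a * c = a * b ⊔ a * c := by rw [← hsup, sup_eq_right.mpr hbc]
    rw [this]; exact le_sup_left
  -- a * b ≤ a
  have hmul_le : ∀ a b : Q, a * b ≤ a := by
    intro a b
    calc a * b ≤ a * ⊤ := hmono a le_top
    _ = a * 1 := by rw [htwo]
    _ = a := mul_one a
  -- Galois connection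
  have hK : ∀ x : Q, k * qres k x ≤ x := fun x => le_of_eq_of_le (hwm x) inf_le_left
  have hle : ∀ y x : Q, k * y ≤ x → y ≤ qres k x := fun y x h => le_sSup h
  have hge : ∀ y x : Q, y ≤ qres k x → k * y ≤ x := fun y x h =>
    le_trans (hmono k h) (hK x)
  have hrmono : ∀ {x y : Q}, x ≤ y → qres k x ≤ qres k y := by
    intro x y hxy
    exact hle _ _ (le_trans (hK x) hxy)
  have hkbot : k * qres k ⊥ = ⊥ := by
    rw [hwm]; exact bot_inf_eq k
  constructor
  · -- meet principal
    intro x b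
    apply le_antisymm
    · exact le_inf (le_trans (hmono k inf_le_left) (hK x)) (hmono k inf_le_right)
    · set d := x ⊓ k * b with hd
      have hdk : d ≤ k := le_trans inf_le_right (hmul_le k b)
      have hdeq : k * qres k d = d := by rw [hwm]; exact inf_eq_left.mpr hdk
      have h1 : qres k d ≤ qres k x := hrmono inf_le_left
      have h2 : qres k d ≤ b ⊔ qres k ⊥ := by
        rw [← hwj b]; exact hrmono inf_le_right
      have hble : qres k ⊥ ≤ qres k x := hrmono bot_le
      have hmod' : (b ⊓ qres k x) ⊔ qres k ⊥ = (b ⊔ qres k ⊥) ⊓ qres k x :=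
        hmod (qres k ⊥) (qres k x) b hble
      calc d = k * qres k d := hdeq.symm
      _ ≤ k * ((b ⊔ qres k ⊥) ⊓ qres k x) := hmono k (le_inf h2 h1)
      _ = k * ((b ⊓ qres k x) ⊔ qres k ⊥) := by rw [hmod']
      _ = k * (b ⊓ qres k x) ⊔ k * qres k ⊥ := hsup k _ _
      _ = k * (b ⊓ qres k x) := by rw [hkbot, sup_bot_eq]
      _ = k * (qres k x ⊓ b) := by rw [inf_comm]
  · -- join principal
    intro x a
    apply le_antisymm
    · -- qres k (k*x ⊔ a) ≤ x ⊔ qres k a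
      have hy : k * qres k (k * x ⊔ a) ≤ (k * x ⊔ a) ⊓ k :=
        le_inf (hK _) (hmul_le k _)
      have hkx : k * x ≤ k := hmul_le k x
      have hmod' : (a ⊓ k) ⊔ k * x = (a ⊔ k * x) ⊓ k := hmod (k * x) k a hkx
      have h2 : k * qres k (k * x ⊔ a) ≤ k * (x ⊔ qres k a) := by
        calc k * qres k (k * x ⊔ a) ≤ (k * x ⊔ a) ⊓ k := hy
        _ = (a ⊔ k * x) ⊓ k := by rw [sup_comm]
        _ = (a ⊓ k) ⊔ k * x := hmod'.symm
        _ = k * qres k a ⊔ k * x := by rw [hwm]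
        _ = k * (qres k a ⊔ x) := (hsup k _ _).symm
        _ = k * (x ⊔ qres k a) := by rw [sup_comm (qres k a) x]
      have h3 : qres k (k * x ⊔ a) ≤ qres k (k * (x ⊔ qres k a)) := hle _ _ h2
      have h4 : qres k (k * (x ⊔ qres k a)) = (x ⊔ qres k a) ⊔ qres k ⊥ := hwj _
      have h5 : (x ⊔ qres k a) ⊔ qres k ⊥ = x ⊔ qres k a := by
        rw [sup_assoc, sup_eq_left.mpr (hrmono bot_le : qres k ⊥ ≤ qres k a)]
      rw [h4, h5] at h3
      exact h3
    · refine sup_le ?_ (hrmono le_sup_right)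
      exact hle _ _ le_sup_left
end

section
/- Let L and M be complete lattices, let f : L → M be a function admitting a right adjoint f⋆ : M → L (i.e. f and f⋆ form a Galois connection: f x ≤ m ↔ x ≤ f⋆ m), and let a ∈ M. Then the following are equivalent: (i) for all x, y ∈ L, if f x ⊔ a = f y ⊔ a then x ⊔ f⋆ a = y ⊔ f⋆ a; (ii) for all x ∈ L, f⋆(f x ⊔ a) ≤ x ⊔ f⋆ a. -/
/-- for a map `f` between complete lattices with right adjoint `f⋆` and an
element `a` of the codomain, the quotient `x ↦ x ⊔ f⋆ a` identifies `x` and `y` whenever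
`f x ⊔ a = f y ⊔ a` if and only if `f⋆ (f x ⊔ a) ≤ x ⊔ f⋆ a` for all `x`. -/
theorem epinormal_composition_criterion {L M : Type*} [CompleteLattice L] [CompleteLattice M]
    (f : L → M) (g : M → L) (adj : ∀ (x : L) (m : M), f x ≤ m ↔ x ≤ g m) (a : M) :
    (∀ x y : L, f x ⊔ a = f y ⊔ a → x ⊔ g a = y ⊔ g a) ↔
    (∀ x : L, g (f x ⊔ a) ≤ x ⊔ g a) := by
  have fmono : ∀ x y : L, x ≤ y → f x ≤ f y := fun x y hxy =>
    (adj x (f y)).mpr (hxy.trans ((adj y (f y)).mp le_rfl))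
  constructor
  · intro h x
    have hxz : x ≤ g (f x ⊔ a) := (adj x (f x ⊔ a)).mp le_sup_left
    have h1 : f (g (f x ⊔ a)) ⊔ a = f x ⊔ a :=
      le_antisymm (sup_le ((adj _ (f x ⊔ a)).mpr le_rfl) le_sup_right)
        (sup_le ((fmono x _ hxz).trans le_sup_left) le_sup_right)
    calc g (f x ⊔ a) ≤ g (f x ⊔ a) ⊔ g a := le_sup_left
      _ = x ⊔ g a := h _ _ h1
  · intro h x y hxy
    have key : ∀ u v : L, f u ⊔ a = f v ⊔ a → u ⊔ g a ≤ v ⊔ g a := by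
      intro u v huv
      have hu : u ≤ g (f v ⊔ a) := (adj u (f v ⊔ a)).mp (huv ▸ le_sup_left)
      exact sup_le (hu.trans (h v)) le_sup_right
    exact le_antisymm (key x y hxy) (key y x hxy.symm)
end

section
/- Let L and M be complete lattices and let f : L → M be an injective function preserving arbitrary suprema. Then there exist a complete lattice N and a function h : M → N preserving arbitrary suprema such that the range of f equals {x ∈ M | h x = ⊥}, if and only if the range of f is a lower set of M (i.e. downward closed). -/
/-!
The kernel `{x | h x = ⊥}` of a sup-preserving `h` is a lower set because `h` is monotone.
Conversely, the range of a sup-preserving `f` has the greatest element `f ⊤`, so if it is a lower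
set it is the principal ideal `Iic (f ⊤)`; and every principal ideal `Iic a` is the kernel of the
sup-preserving map `x ↦ (x ≰ a)` into the two-element lattice `Prop`, since
`sSup s ≤ a ↔ ∀ x ∈ s, x ≤ a`.
-/

universe u v

open Set

theorem IsLowerSet.eq_Iic_of_isGreatest {α : Type*} [Preorder α] {s : Set α} {a : α}
    (hs : IsLowerSet s) (ha : IsGreatest s a) : s = Iic a :=
  Subset.antisymm (fun _ hx => ha.2 hx) (fun _ hx => hs hx ha.1)

theorem Monotone.isGreatest_range_top {α β : Type*} [Preorder α] [OrderTop α] [Preorder β]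
    {f : α → β} (hf : Monotone f) : IsGreatest (range f) (f ⊤) :=
  ⟨mem_range_self ⊤, forall_mem_range.2 fun _ => hf le_top⟩

theorem sSupHom.isLowerSet_setOf_eq_bot {α β : Type*} [CompleteLattice α] [CompleteLattice β]
    (f : sSupHom α β) : IsLowerSet {x | f x = ⊥} :=
  fun _ _ hyx hx => le_bot_iff.1 <| (OrderHomClass.mono f hyx).trans_eq hx

def sSupHom.notLE {α : Type u} [CompleteLattice α] (a : α) : sSupHom α (ULift.{u} Prop) where
  toFun x := ULift.up (¬ x ≤ a)
  map_sSup' s := by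
    apply ULift.down_injective
    simp only [ULift.down_sSup, sSup_Prop_eq, sSup_le_iff, not_forall,
      mem_preimage, mem_image, ULift.up.injEq, eq_iff_iff]
    exact ⟨fun ⟨x, hx, hxa⟩ => ⟨_, ⟨x, hx, Iff.rfl⟩, hxa⟩,
      fun ⟨_, ⟨x, hx, hxp⟩, hp⟩ => ⟨x, hx, hxp.2 hp⟩⟩

theorem sSupHom.setOf_notLE_eq_bot {α : Type u} [CompleteLattice α] (a : α) :
    {x | sSupHom.notLE a x = ⊥} = Iic a := by
  ext x
  simp [sSupHom.notLE, ← ULift.down_inj]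

theorem normal_mono_iff_range_lowerSet_general {L : Type u} {M : Type v}
    [CompleteLattice L] [CompleteLattice M]
    (f : L → M)
    (hsup : ∀ S : Set L, f (sSup S) = sSup (f '' S)) :
    (∃ (N : Type v) (_ : CompleteLattice N) (h : M → N),
      (∀ S : Set M, h (sSup S) = sSup (h '' S)) ∧
      Set.range f = {x : M | h x = ⊥}) ↔
    IsLowerSet (Set.range f) := by
  constructor
  · rintro ⟨N, _, h, hh, hker⟩
    rw [hker]
    exact (⟨h, hh⟩ : sSupHom M N).isLowerSet_setOf_eq_bot
  · intro hlow
    have hf : Monotone (⟨f, hsup⟩ : sSupHom L M) := OrderHomClass.mono _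
    refine ⟨ULift Prop, inferInstance, sSupHom.notLE (f ⊤), map_sSup _, ?_⟩
    rw [sSupHom.setOf_notLE_eq_bot]
    exact hlow.eq_Iic_of_isGreatest hf.isGreatest_range_top

/-- a monomorphism of suplattices (an injective sup-preserving map between
complete lattices) is normal — i.e. it occurs as the kernel of some sup-preserving map —
if and only if its range is downward closed. -/
theorem normal_mono_iff_range_lowerSet {L : Type u} {M : Type v}
    [CompleteLattice L] [CompleteLattice M]
    (f : L → M) (hinj : Function.Injective f)
    (hsup : ∀ S : Set L, f (sSup S) = sSup (f '' S)) :
    (∃ (N : Type v) (_ : CompleteLattice N) (h : M → N),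
      (∀ S : Set M, h (sSup S) = sSup (h '' S)) ∧
      Set.range f = {x : M | h x = ⊥}) ↔
    IsLowerSet (Set.range f) :=
  normal_mono_iff_range_lowerSet_general f hsup
end

section
/- Let D be a commutative semiring in which addition is idempotent (x + x = x for all x), partially ordered by x ≤ y if and only if x + y = y. Let a₁, …, a_k ∈ D satisfy a₁ + ⋯ + a_k = 1, let x, y ∈ D, and suppose that for each i there is a natural number nᵢ with aᵢ^{nᵢ}·x ≤ y. Then x ≤ y. -/
section Aux

variable {D : Type*} [CommSemiring D]

private lemma idem_le_trans {a b c : D} (h1 : a + b = b) (h2 : b + c = c) : a + c = c := by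
  rw [← h2, ← add_assoc, h1]

private lemma idem_add_le {a b c : D} (h1 : a + c = c) (h2 : b + c = c) : (a + b) + c = c := by
  rw [add_assoc, h2, h1]

private lemma idem_mul_le_left {a b : D} (c : D) (h : a + b = b) : c * a + c * b = c * b := by
  rw [← mul_add, h]

private lemma idem_le_of_le_one {c z : D} (h : c + 1 = 1) : c * z + z = z := by
  calc c * z + z = (c + 1) * z := by rw [add_mul, one_mul]
    _ = z := by rw [h, one_mul]

private lemma idem_pow_le_one (hidem : ∀ x : D, x + x = x) {c : D} (h : c + 1 = 1) :
    ∀ s : ℕ, c ^ s + 1 = 1 := by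
  intro s
  induction s with
  | zero => simpa using hidem 1
  | succ s ih =>
      have h1 : c ^ (s + 1) + c = c := by
        rw [pow_succ]
        exact idem_le_of_le_one ih
      exact idem_le_trans h1 h

private lemma key (hidem : ∀ x : D, x + x = x) (u v y : D)
    (hu : u + 1 = 1) (hv : v + 1 = 1) :
    ∀ s m n x, m + n = s → u ^ m * x + y = y → v ^ n * x + y = y →
      (u + v) ^ s * x + y = y := by
  have huv : (u + v) + 1 = 1 := by
    rw [add_assoc, hv, hu]
  intro s
  induction s with
  | zero =>
      intro m n x hmn h1 h2
      have hm : m = 0 := Nat.eq_zero_of_add_eq_zero_right hmn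
      rw [hm] at h1
      simpa using h1
  | succ s ih =>
      intro m n x hmn h1 h2
      match m, n, hmn with
      | 0, n, hmn =>
          have hx : x + y = y := by simpa using h1
          have hp : (u + v) ^ (s + 1) + 1 = 1 := idem_pow_le_one hidem huv (s + 1)
          exact idem_le_trans (idem_le_of_le_one hp) hx
      | m + 1, 0, hmn =>
          have hx : x + y = y := by simpa using h2
          have hp : (u + v) ^ (s + 1) + 1 = 1 := idem_pow_le_one hidem huv (s + 1)
          exact idem_le_trans (idem_le_of_le_one hp) hx
      | m + 1, n + 1, hmn =>
          have hs1 : m + (n + 1) = s := by omega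
          have hs2 : (m + 1) + n = s := by omega
          -- first summand : u * (u+v)^s * x ≤ y
          have t1 : (u + v) ^ s * (u * x) + y = y := by
            apply ih m (n + 1) (u * x) hs1
            · have : u ^ m * (u * x) = u ^ (m + 1) * x := by ring
              rw [this]; exact h1
            · have : v ^ (n + 1) * (u * x) = u * (v ^ (n + 1) * x) := by ring
              rw [this]
              exact idem_le_trans (idem_mul_le_left u h2) (idem_le_of_le_one hu)
          have t2 : (u + v) ^ s * (v * x) + y = y := by
            apply ih (m + 1) n (v * x) hs2
            · have : u ^ (m + 1) * (v * x) = v * (u ^ (m + 1) * x) := by ring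
              rw [this]
              exact idem_le_trans (idem_mul_le_left v h1) (idem_le_of_le_one hv)
            · have : v ^ n * (v * x) = v ^ (n + 1) * x := by ring
              rw [this]; exact h2
          have expand : (u + v) ^ (s + 1) * x
              = (u + v) ^ s * (u * x) + (u + v) ^ s * (v * x) := by ring
          rw [expand]
          exact idem_add_le t1 t2

private lemma idem_sum_le_one {ι : Type*} (s : Finset ι) (f : ι → D)
    (h : ∀ i ∈ s, f i + 1 = 1) : (∑ i ∈ s, f i) + 1 = 1 := by
  induction s using Finset.cons_induction with
  | empty => simp
  | cons i s hi ih =>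
      rw [Finset.sum_cons, add_assoc, ih (fun j hj => h j (Finset.mem_cons_of_mem hj)),
        h i (Finset.mem_cons_self i s)]

private lemma fam (hidem : ∀ x : D, x + x = x) (x y : D) :
    ∀ k (a : Fin (k + 1) → D) (n : Fin (k + 1) → ℕ),
      (∀ i, a i + 1 = 1) → (∀ i, a i ^ n i * x + y = y) →
      (∑ i, a i) ^ (∑ i, n i) * x + y = y := by
  intro k
  induction k with
  | zero =>
      intro a n h1 h2
      rw [Fin.sum_univ_one, Fin.sum_univ_one]
      exact h2 0
  | succ k ih =>
      intro a n h1 h2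
      rw [Fin.sum_univ_succ (f := a), Fin.sum_univ_succ (f := n)]
      have hv : (∑ i : Fin (k + 1), a i.succ) + 1 = 1 :=
        idem_sum_le_one _ _ (fun i _ => h1 i.succ)
      have tail : (∑ i : Fin (k + 1), a i.succ) ^ (∑ i : Fin (k + 1), n i.succ) * x + y = y :=
        ih (fun i => a i.succ) (fun i => n i.succ) (fun i => h1 i.succ) (fun i => h2 i.succ)
      exact key hidem (a 0) _ y (h1 0) hv _ (n 0) _ x rfl (h2 0) tail

end Aux

/-- in a commutative semiring with idempotent addition (ordered by
`x ≤ y ↔ x + y = y`), if `a₁ + ⋯ + a_k = 1` and for each `i` there is `nᵢ` with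
`aᵢ ^ nᵢ * x ≤ y`, then `x ≤ y`. -/
theorem le_of_pow_mul_le_on_cover {D : Type*} [CommSemiring D]
    (hidem : ∀ x : D, x + x = x)
    {k : ℕ} (a : Fin k → D) (ha : ∑ i, a i = 1) (x y : D)
    (n : Fin k → ℕ) (h : ∀ i, a i ^ n i * x + y = y) :
    x + y = y := by
  cases k with
  | zero =>
      have h0 : (0 : D) = 1 := by simpa using ha
      calc x + y = x * 1 + y := by rw [mul_one]
        _ = x * 0 + y := by rw [h0]
        _ = y := by rw [mul_zero, zero_add]
  | succ k =>
      have h1 : ∀ i, a i + 1 = 1 := by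
        intro i
        have herase : a i + ∑ j ∈ Finset.univ.erase i, a j = ∑ j, a j :=
          Finset.add_sum_erase _ a (Finset.mem_univ i)
        have : a i + ∑ j, a j = ∑ j, a j := by
          conv_lhs => rw [← herase, ← add_assoc, hidem (a i)]
          exact herase
        rw [ha] at this
        exact this
      have := fam hidem x y k a n h1 h
      rw [ha, one_pow, one_mul] at this
      exact this
end

section
/- Let R be a commutative ring. Call a function v : R → ℕ ∪ {∞} a positive prevaluation if v(0) = ∞, v(a + b) ≥ min(v(a), v(b)) for all a, b, v(1) = 0, and v(a·b) = v(a) + v(b) for all a, b. Then the assignment v ↦ w_v, where w_v(I) = inf {v(a) | a ∈ I} for each ideal I of R, is a bijection from the set of positive prevaluations on R onto the set of functions w : Idl(R) → ℕ ∪ {∞} such that w sends arbitrary suprema of ideals to infima (w(sSup 𝒮) = inf {w(I) | I ∈ 𝒮} for every set 𝒮 of ideals, where the infimum of the empty family is ∞), w(I·J) = w(I) + w(J) for all ideals I, J, and w(R) = 0. -/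
/-- A positive prevaluation on a commutative ring `R`. -/
def IsPosPrevaluation {R : Type*} [CommRing R] (v : R → ℕ∞) : Prop :=
  v 0 = ⊤ ∧ (∀ a b : R, min (v a) (v b) ≤ v (a + b)) ∧ v 1 = 0 ∧
    ∀ a b : R, v (a * b) = v a + v b

/-- A quantale valuation on the quantale of ideals of `R`: it sends arbitrary suprema of
ideals to infima, products of ideals to sums, and the unit ideal to `0`. -/
def IsQuantaleValuation {R : Type*} [CommRing R] (w : Ideal R → ℕ∞) : Prop :=
  (∀ 𝒮 : Set (Ideal R), w (sSup 𝒮) = ⨅ I ∈ 𝒮, w I) ∧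
  (∀ I J : Ideal R, w (I * J) = w I + w J) ∧ w ⊤ = 0

/-!
For a positive prevaluation `v` the elements `x` with `v x ≥ ⨅ a ∈ S, v a` form an ideal, so the
infimum of `v` over `span S` is its infimum over `S`. Applied to `sSup 𝒮 = span (⋃ 𝒮)`,
`I * J = span {a * b | a ∈ I, b ∈ J}` and `span {a}`, this gives the axioms of a quantale
valuation for `I ↦ ⨅ a ∈ I, v a` and recovers `v` from it. Conversely a quantale valuation `w`
is antitone, `a ↦ w (span {a})` is a positive prevaluation because
`span {a + b} ≤ span {a} ⊔ span {b}` and `span {a * b} = span {a} * span {b}`, and it gives back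
`w` since every ideal is the supremum of the principal ideals of its elements.
-/

namespace IsPosPrevaluation

variable {R : Type*} [CommRing R] {v : R → ℕ∞}

theorem iInf_mem_span (hv : IsPosPrevaluation v) (S : Set R) :
    ⨅ a ∈ Ideal.span S, v a = ⨅ a ∈ S, v a := by
  obtain ⟨h0, hadd, -, hmul⟩ := hv
  refine le_antisymm (iInf_le_iInf_of_subset Ideal.subset_span) (le_iInf₂ fun a ha => ?_)
  induction ha using Submodule.span_induction with
  | mem x hx => exact iInf₂_le x hx
  | zero => simp only [h0, le_top]
  | add x y _ _ hx hy => exact (le_min hx hy).trans (hadd x y)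
  | smul r x _ hx => rw [smul_eq_mul, hmul]; exact hx.trans le_add_self

theorem iInf_mem_span_singleton (hv : IsPosPrevaluation v) (a : R) :
    ⨅ x ∈ Ideal.span {a}, v x = v a := by
  rw [hv.iInf_mem_span, iInf_singleton]

theorem iInf_mem_sSup (hv : IsPosPrevaluation v) (𝒮 : Set (Ideal R)) :
    ⨅ a ∈ sSup 𝒮, v a = ⨅ I ∈ 𝒮, ⨅ a ∈ I, v a := by
  rw [← Submodule.span_biUnion, hv.iInf_mem_span]
  simp only [iInf_iUnion]
  rfl

theorem iInf_mem_mul (hv : IsPosPrevaluation v) (I J : Ideal R) :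
    ⨅ x ∈ I * J, v x = (⨅ a ∈ I, v a) + ⨅ b ∈ J, v b := by
  rw [Submodule.mul_eq_span_mul_set, hv.iInf_mem_span, ← Set.image2_mul, iInf_image2,
    ENat.iInf₂_add]
  simp only [hv.2.2.2, ENat.add_iInf₂]
  rfl

theorem iInf_mem_top (hv : IsPosPrevaluation v) : ⨅ a ∈ (⊤ : Ideal R), v a = 0 :=
  nonpos_iff_eq_zero.mp (hv.2.2.1 ▸ iInf₂_le 1 Submodule.mem_top)

theorem isQuantaleValuation (hv : IsPosPrevaluation v) :
    IsQuantaleValuation fun I : Ideal R => ⨅ a ∈ I, v a :=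
  ⟨hv.iInf_mem_sSup, hv.iInf_mem_mul, hv.iInf_mem_top⟩

end IsPosPrevaluation

namespace IsQuantaleValuation

variable {R : Type*} [CommRing R] {w : Ideal R → ℕ∞}

theorem map_sup (hw : IsQuantaleValuation w) (I J : Ideal R) : w (I ⊔ J) = min (w I) (w J) := by
  rw [← sSup_pair, hw.1, iInf_pair]

theorem antitone (hw : IsQuantaleValuation w) : Antitone w := fun I J hIJ => by
  rw [← sup_eq_right.mpr hIJ, hw.map_sup]
  exact min_le_left _ _

theorem map_bot (hw : IsQuantaleValuation w) : w ⊥ = ⊤ := by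
  rw [← sSup_empty, hw.1, iInf_emptyset]

theorem isPosPrevaluation (hw : IsQuantaleValuation w) :
    IsPosPrevaluation fun a : R => w (Ideal.span {a}) := by
  refine ⟨?_, fun a b => ?_, ?_, fun a b => ?_⟩ <;> beta_reduce
  · rw [Ideal.span_singleton_eq_bot.mpr rfl, hw.map_bot]
  · rw [← hw.map_sup]
    exact hw.antitone (Ideal.span_singleton_le_iff_mem _ |>.mpr
      (add_mem (Ideal.mem_sup_left (Ideal.mem_span_singleton_self a))
        (Ideal.mem_sup_right (Ideal.mem_span_singleton_self b))))
  · rw [Ideal.span_singleton_one, hw.2.2]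
  · rw [← Ideal.span_singleton_mul_span_singleton, hw.2.1]

theorem iInf_mem_span_singleton (hw : IsQuantaleValuation w) (I : Ideal R) :
    ⨅ a ∈ I, w (Ideal.span {a}) = w I := by
  have hI : sSup ((fun a => Ideal.span {a}) '' I) = I := by
    rw [sSup_image]
    exact (Submodule.span_eq_iSup_of_singleton_spans (I : Set R)).symm.trans (Submodule.span_eq I)
  conv_rhs => rw [← hI, hw.1, iInf_image]
  rfl

end IsQuantaleValuation

/-- `v ↦ (I ↦ inf {v a | a ∈ I})` is a bijection from positive prevaluations
on `R` onto quantale valuations `Idl(R) → ℕ∞`. -/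
theorem prevaluation_valuation_bijection {R : Type*} [CommRing R] :
    Set.BijOn (fun (v : R → ℕ∞) => fun I : Ideal R => ⨅ a ∈ I, v a)
      {v | IsPosPrevaluation v} {w | IsQuantaleValuation w} := by
  refine ⟨fun v hv => hv.isQuantaleValuation, fun v₁ hv₁ v₂ hv₂ h => funext fun a => ?_,
    fun w hw => ⟨_, hw.isPosPrevaluation, funext hw.iInf_mem_span_singleton⟩⟩
  rw [← hv₁.iInf_mem_span_singleton, ← hv₂.iInf_mem_span_singleton]
  exact congrFun h (Ideal.span {a})
end

section
/- Let L be a complete lattice and let D(L) denote the complete lattice of lower sets of L ordered by inclusion, with join map ⋁ : D(L) → L sending a lower set to its supremum in L. Then L is supercontinuous if and only if ⋁ has a left adjoint (a monotone ℓ : L → D(L) with ℓ(a) ⊆ D ⟺ a ≤ ⋁D for all a ∈ L and D ∈ D(L)); moreover, when L is supercontinuous, the map a ↦ {b | b ⋘ a} is such a left adjoint. -/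
/-- `b` is totally below `a`: every cover of `a` by a supremum contains a member above `b`. -/
def TotallyBelow {L : Type*} [CompleteLattice L] (b a : L) : Prop :=
  ∀ S : Set L, a ≤ sSup S → ∃ s ∈ S, b ≤ s

/-- A complete lattice is supercontinuous if every element is the supremum of the elements
totally below it. -/
def Supercontinuous (L : Type*) [CompleteLattice L] : Prop :=
  ∀ a : L, a = sSup {b | TotallyBelow b a}

/-- The lower set of elements totally below `a`. -/
def totallyBelowLowerSet {L : Type*} [CompleteLattice L] (a : L) : LowerSet L :=
  ⟨{b | TotallyBelow b a}, fun _b _c hcb hb S hS =>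
    let ⟨s, hs, hbs⟩ := hb S hS
    ⟨s, hs, hcb.trans hbs⟩⟩

lemma TotallyBelow.le {L : Type*} [CompleteLattice L] {b a : L}
    (h : TotallyBelow b a) : b ≤ a := by
  obtain ⟨s, hs, hbs⟩ := h {a} (by simp)
  simpa [Set.mem_singleton_iff.mp hs] using hbs

lemma gc_of_supercontinuous {L : Type*} [CompleteLattice L] (h : Supercontinuous L) :
    GaloisConnection (totallyBelowLowerSet (L := L))
      (fun D : LowerSet L => sSup (D : Set L)) := by
  intro a D
  constructor
  · intro hle
    calc a = sSup {b | TotallyBelow b a} := h a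
    _ ≤ sSup (D : Set L) := sSup_le_sSup hle
  · intro hle b hb
    obtain ⟨s, hs, hbs⟩ := hb (D : Set L) hle
    exact D.lower hbs hs

/-- a complete lattice `L` is supercontinuous iff the join map
`D(L) → L` on the lattice of lower sets has a left adjoint; moreover, in that case
`a ↦ {b | b ⋘ a}` is such a left adjoint. -/
theorem supercontinuous_iff_join_has_left_adjoint {L : Type*} [CompleteLattice L] :
    (Supercontinuous L ↔
      ∃ ℓ : L → LowerSet L, GaloisConnection ℓ (fun D : LowerSet L => sSup (D : Set L))) ∧
    (Supercontinuous L →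
      GaloisConnection (totallyBelowLowerSet (L := L))
        (fun D : LowerSet L => sSup (D : Set L))) := by
  refine ⟨⟨fun h => ⟨_, gc_of_supercontinuous h⟩, ?_⟩, gc_of_supercontinuous⟩
  rintro ⟨ℓ, hgc⟩ a
  have hsub : ∀ b ∈ (ℓ a : Set L), TotallyBelow b a := by
    intro b hb S hS
    have h1 : a ≤ sSup (lowerClosure S : Set L) := by
      refine hS.trans (sSup_le_sSup subset_lowerClosure)
    have h2 : ℓ a ≤ lowerClosure S := (hgc a (lowerClosure S)).mpr h1
    obtain ⟨s, hs, hbs⟩ := h2 hb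
    exact ⟨s, hs, hbs⟩
  refine le_antisymm ?_ (sSup_le fun b hb => hb.le)
  calc a ≤ sSup (ℓ a : Set L) := (hgc a (ℓ a)).mp le_rfl
  _ ≤ sSup {b | TotallyBelow b a} := sSup_le_sSup hsub
end

section
/- Every supercontinuous complete lattice L satisfies the frame distributivity law: x ⊓ sSup S = sSup {x ⊓ s | s ∈ S} for every x ∈ L and every subset S ⊆ L (so L is a frame). -/
/-- every supercontinuous complete lattice satisfies the frame
distributivity law. -/
theorem supercontinuous_frame_distributivity {L : Type*} [CompleteLattice L]
    (hL : Supercontinuous L) (x : L) (S : Set L) :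
    x ⊓ sSup S = sSup ((fun s => x ⊓ s) '' S) := by
  apply le_antisymm
  · set a := x ⊓ sSup S with ha
    conv_lhs => rw [hL a]
    apply sSup_le
    intro b hb
    have hba : b ≤ a := by
      obtain ⟨s, hs, hbs⟩ := hb {a} (le_sSup rfl)
      simpa [Set.mem_singleton_iff.mp hs] using hbs
    obtain ⟨s, hsS, hbs⟩ := hb S (ha.trans_le inf_le_right)
    exact le_trans (le_inf (((hba.trans_eq ha).trans inf_le_left)) hbs)
      (le_sSup ⟨s, hsS, rfl⟩)
  · apply sSup_le
    rintro _ ⟨s, hs, rfl⟩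
    exact le_inf inf_le_left (le_trans inf_le_right (le_sSup hs))
end

section
/- Let L be a supercontinuous complete lattice and b ∈ L. Then the predicate a ↦ (b ⋘ a) preserves arbitrary suprema: for every subset S ⊆ L, b ⋘ sSup S if and only if there exists s ∈ S with b ⋘ s. -/
/-- in a supercontinuous complete lattice, the predicate `TotallyBelow b`
preserves arbitrary suprema. -/
theorem totallyBelow_preserves_sSup {L : Type*} [CompleteLattice L]
    (hL : Supercontinuous L) (b : L) (S : Set L) :
    TotallyBelow b (sSup S) ↔ ∃ s ∈ S, TotallyBelow b s := by
  constructor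
  · intro h
    have hle : sSup S ≤ sSup {c | ∃ s ∈ S, TotallyBelow c s} := by
      apply sSup_le
      intro s hs
      calc s = sSup {c | TotallyBelow c s} := hL s
        _ ≤ _ := sSup_le_sSup (fun c hc => show ∃ t ∈ S, TotallyBelow c t from ⟨s, hs, hc⟩)
    obtain ⟨c, ⟨s, hs, hc⟩, hbc⟩ := h _ hle
    exact ⟨s, hs, fun T hT => by
      obtain ⟨t, ht, hct⟩ := hc T hT
      exact ⟨t, ht, hbc.trans hct⟩⟩
  · rintro ⟨s, hs, hb⟩ T hT
    exact hb T ((le_sSup hs).trans hT)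
end

section
/- Let X be a continuous dcpo equipped with the Scott topology, and let O(X) denote the complete lattice of Scott-open subsets of X. The assignment S ↦ h_S, where h_S(U) is the proposition that S ∩ U is nonempty, is a bijection from the set of Scott-closed subsets of X (lower sets closed under suprema of directed subsets) onto the set of functions h : O(X) → Prop preserving arbitrary suprema (for every family of opens, h of its union holds iff h holds of some member; in particular h(∅) is false). -/
/-- `b` is way below `a` in a dcpo: every directed cover of `a` contains a member above `b`. -/
def WayBelow {X : Type*} [PartialOrder X] (b a : X) : Prop :=
  ∀ D : Set X, D.Nonempty → DirectedOn (· ≤ ·) D →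
    ∀ u : X, IsLUB D u → a ≤ u → ∃ d ∈ D, b ≤ d

/-- A subset of a dcpo is Scott-open if it is an upper set and every directed subset whose
supremum lies in it meets it. -/
def ScottOpen {X : Type*} [PartialOrder X] (U : Set X) : Prop :=
  IsUpperSet U ∧ ∀ D : Set X, D.Nonempty → DirectedOn (· ≤ ·) D →
    ∀ u : X, IsLUB D u → u ∈ U → (D ∩ U).Nonempty

/-- A subset of a dcpo is Scott-closed if it is a lower set closed under suprema of
directed subsets. -/
def ScottClosed {X : Type*} [PartialOrder X] (S : Set X) : Prop :=
  IsLowerSet S ∧ ∀ D : Set X, D ⊆ S → D.Nonempty → DirectedOn (· ≤ ·) D →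
    ∀ u : X, IsLUB D u → u ∈ S

lemma scottOpen_compl {X : Type*} [PartialOrder X] {S : Set X} (hS : ScottClosed S) :
    ScottOpen Sᶜ := by
  refine ⟨fun a b hab ha hb => ha (hS.1 hab hb), ?_⟩
  intro D hne hdir u hu huc
  by_contra hemp
  rw [Set.not_nonempty_iff_eq_empty] at hemp
  exact huc (hS.2 D (fun d hd => by
    by_contra hdS
    exact Set.eq_empty_iff_forall_notMem.mp hemp d ⟨hd, hdS⟩) hne hdir u hu)

lemma scottOpen_inter {X : Type*} [PartialOrder X] {A B : Set X} (hA : ScottOpen A)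
    (hB : ScottOpen B) : ScottOpen (A ∩ B) := by
  refine ⟨hA.1.inter hB.1, ?_⟩
  intro D hne hdir u hu ⟨huA, huB⟩
  obtain ⟨a, haD, haA⟩ := hA.2 D hne hdir u hu huA
  obtain ⟨b, hbD, hbB⟩ := hB.2 D hne hdir u hu huB
  obtain ⟨c, hcD, hac, hbc⟩ := hdir a haD b hbD
  exact ⟨c, hcD, hA.1 hac haA, hB.1 hbc hbB⟩

/-- for a continuous dcpo `X`, the map sending a Scott-closed set `S` to the
predicate `U ↦ (S ∩ U).Nonempty` is a bijection from Scott-closed subsets onto the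
sup-preserving maps from the lattice of Scott-open sets to `Prop`. -/
theorem scottClosed_bij_suplattice_homs {X : Type*} [PartialOrder X]
    (hdcpo : ∀ D : Set X, D.Nonempty → DirectedOn (· ≤ ·) D → ∃ u : X, IsLUB D u)
    (hcont : ∀ a : X, {b | WayBelow b a}.Nonempty ∧
      DirectedOn (· ≤ ·) {b | WayBelow b a} ∧ IsLUB {b | WayBelow b a} a) :
    Set.BijOn
      (fun (S : Set X) => fun (U : {U : Set X // ScottOpen U}) => (S ∩ (U : Set X)).Nonempty)
      {S | ScottClosed S}
      {h : {U : Set X // ScottOpen U} → Prop |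
        ∀ (𝒰 : Set {U : Set X // ScottOpen U}) (V : {U : Set X // ScottOpen U}),
          (V : Set X) = ⋃ U ∈ 𝒰, (U : Set X) → (h V ↔ ∃ U ∈ 𝒰, h U)} := by
  refine ⟨?_, ?_, ?_⟩
  · -- MapsTo
    intro S _ 𝒰 V hV
    simp only
    rw [hV]
    constructor
    · rintro ⟨x, hxS, hxU⟩
      simp only [Set.mem_iUnion] at hxU
      obtain ⟨U, hU𝒰, hxU⟩ := hxU
      exact ⟨U, hU𝒰, x, hxS, hxU⟩
    · rintro ⟨U, hU𝒰, x, hxS, hxU⟩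
      exact ⟨x, hxS, Set.mem_iUnion.mpr ⟨U, Set.mem_iUnion.mpr ⟨hU𝒰, hxU⟩⟩⟩
  · -- InjOn
    intro S hS T hT heq
    have key : ∀ S T : Set X, ScottClosed S → ScottClosed T →
        (fun (U : {U : Set X // ScottOpen U}) => (S ∩ (U : Set X)).Nonempty) =
        (fun (U : {U : Set X // ScottOpen U}) => (T ∩ (U : Set X)).Nonempty) → S ⊆ T := by
      intro S T _ hT heq x hxS
      by_contra hxT
      have h1 : (S ∩ (⟨Tᶜ, scottOpen_compl hT⟩ : {U : Set X // ScottOpen U}).1).Nonempty :=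
        ⟨x, hxS, hxT⟩
      have h2 := congrFun heq (⟨Tᶜ, scottOpen_compl hT⟩ : {U : Set X // ScottOpen U})
      obtain ⟨y, hyT, hyTc⟩ := h2 ▸ h1
      exact hyTc hyT
    exact Set.Subset.antisymm (key S T hS hT heq) (key T S hT hS heq.symm)
  · -- SurjOn
    intro h hh
    set S : Set X := {x | ∀ U : {U : Set X // ScottOpen U}, x ∈ (U : Set X) → h U} with hSdef
    have hmono : ∀ A B : {U : Set X // ScottOpen U}, (A : Set X) ⊆ (B : Set X) → h A → h B := by
      intro A B hAB hA
      have := hh {A, B} B (by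
        rw [Set.biUnion_pair]
        exact (Set.union_eq_self_of_subset_left hAB).symm)
      exact this.mpr ⟨A, Or.inl rfl, hA⟩
    refine ⟨S, ⟨?_, ?_⟩, ?_⟩
    · intro a b hab hb U haU
      exact hb U (U.2.1 hab haU)
    · intro D hD hne hdir u hu U huU
      obtain ⟨d, hdD, hdU⟩ := U.2.2 D hne hdir u hu huU
      exact hD hdD U hdU
    · funext U
      simp only [eq_iff_iff]
      constructor
      · rintro ⟨x, hxS, hxU⟩
        exact hxS U hxU
      · intro hU
        by_contra hemp
        rw [Set.not_nonempty_iff_eq_empty] at hemp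
        set 𝒰 : Set {U : Set X // ScottOpen U} := {W | ¬ h W ∧ (W : Set X) ⊆ (U : Set X)}
        have hUeq : (U : Set X) = ⋃ W ∈ 𝒰, (W : Set X) := by
          apply Set.Subset.antisymm
          · intro x hxU
            have hxS : x ∉ S := fun hxS =>
              Set.eq_empty_iff_forall_notMem.mp hemp x ⟨hxS, hxU⟩
            simp only [hSdef, Set.mem_setOf_eq, not_forall] at hxS
            obtain ⟨V, hxV, hVnh⟩ := hxS
            refine Set.mem_iUnion.mpr ⟨⟨(U : Set X) ∩ (V : Set X), scottOpen_inter U.2 V.2⟩,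
              Set.mem_iUnion.mpr ⟨⟨fun hW => hVnh (hmono _ V Set.inter_subset_right hW),
                Set.inter_subset_left⟩, hxU, hxV⟩⟩
          · intro x hx
            simp only [Set.mem_iUnion] at hx
            obtain ⟨W, hW, hxW⟩ := hx
            exact hW.2 hxW
        obtain ⟨W, hW𝒰, hWh⟩ := (hh 𝒰 U hUeq).mp hU
        exact hW𝒰.1 hWh
end

section
/- Let L and M be frames and let f : L → M be a frame homomorphism (preserving finite meets and arbitrary joins) that admits a left adjoint f_! : M → L (f_! and f form a Galois connection: f_!(m) ≤ x ⟺ m ≤ f(x)). Then f preserves Heyting implication (f(q ⇨ r) = f(q) ⇨ f(r) for all q, r ∈ L) if and only if f_! satisfies Frobenius reciprocity: f_!(p ⊓ f(q)) = f_!(p) ⊓ q for all p ∈ M and q ∈ L. -/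
/-- a frame homomorphism `f` with a left adjoint `f_!` preserves Heyting
implication if and only if `f_!` satisfies Frobenius reciprocity. -/
theorem open_frame_hom_iff_frobenius {L M : Type*} [Order.Frame L] [Order.Frame M]
    (f : L → M)
    (hinf : ∀ a b : L, f (a ⊓ b) = f a ⊓ f b) (htop : f ⊤ = ⊤)
    (hsup : ∀ S : Set L, f (sSup S) = sSup (f '' S))
    (fl : M → L) (adj : GaloisConnection fl f) :
    (∀ q r : L, f (q ⇨ r) = f q ⇨ f r) ↔
    (∀ (p : M) (q : L), fl (p ⊓ f q) = fl p ⊓ q) := by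
  have fmono : Monotone f := by
    intro a b hab
    have : f (a ⊓ b) = f a ⊓ f b := hinf a b
    rw [inf_eq_left.mpr hab] at this
    rw [this]; exact inf_le_right
  constructor
  · intro h p q
    apply le_antisymm
    · -- fl (p ⊓ f q) ≤ fl p ⊓ q  (holds always)
      have h1 : p ⊓ f q ≤ f (fl p ⊓ q) := by
        rw [hinf]
        exact inf_le_inf (adj.le_u_l p) le_rfl
      exact adj.l_le h1
    · -- fl p ⊓ q ≤ fl (p ⊓ f q) uses Heyting preservation
      rw [← le_himp_iff]
      apply adj.l_le
      rw [h, le_himp_iff]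
      exact adj.le_u_l _
  · intro h q r
    apply le_antisymm
    · rw [le_himp_iff, ← hinf]
      exact fmono (himp_inf_le)
    · rw [← adj.le_iff_le]
      have : fl (f q ⇨ f r) ⊓ q = fl ((f q ⇨ f r) ⊓ f q) := (h _ _).symm
      rw [le_himp_iff, this]
      exact adj.l_le himp_inf_le
end

section
/- Let Q and Q′ be two-sided commutative quantales and let i : Q → Q′ be a quantale homomorphism (preserving arbitrary suprema, multiplication, and the unit). Call a function d : Q → Q′ an i-derivation if d preserves arbitrary suprema, i(x) ≤ d(x) for all x, and d(x·y) = i(x)·d(y) ⊔ i(y)·d(x) for all x, y. Then for every nonempty family (d_α)_{α ∈ I} of i-derivations, the pointwise supremum x ↦ ⨆_α d_α(x) is again an i-derivation. -/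
/-- `d` is an `i`-derivation between two-sided commutative quantales: it preserves
arbitrary suprema, dominates `i`, and satisfies the Leibniz rule. -/
def IsQuantaleDerivation {Q Q' : Type*} [CompleteLattice Q] [Mul Q]
    [CompleteLattice Q'] [Mul Q'] (i d : Q → Q') : Prop :=
  (∀ S : Set Q, d (sSup S) = ⨆ a ∈ S, d a) ∧
  (∀ x : Q, i x ≤ d x) ∧
  (∀ x y : Q, d (x * y) = i x * d y ⊔ i y * d x)

/-- for a quantale homomorphism `i` between two-sided commutative quantales,
the pointwise supremum of a nonempty family of `i`-derivations is an `i`-derivation. -/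
theorem iSup_of_derivations_is_derivation {Q Q' : Type*}
    [CompleteLattice Q] [CommMonoid Q] [CompleteLattice Q'] [CommMonoid Q']
    (hdistQ : ∀ (a : Q) (S : Set Q), a * sSup S = ⨆ s ∈ S, a * s)
    (htwoQ : (1 : Q) = ⊤)
    (hdistQ' : ∀ (a : Q') (S : Set Q'), a * sSup S = ⨆ s ∈ S, a * s)
    (htwoQ' : (1 : Q') = ⊤)
    (i : Q → Q')
    (hisup : ∀ S : Set Q, i (sSup S) = ⨆ a ∈ S, i a)
    (himul : ∀ x y : Q, i (x * y) = i x * i y)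
    (hione : i 1 = 1)
    {ι : Type*} [Nonempty ι] (d : ι → Q → Q')
    (hd : ∀ α : ι, IsQuantaleDerivation i (d α)) :
    IsQuantaleDerivation i (fun x => ⨆ α : ι, d α x) := by
  have hdist' : ∀ (a : Q') (f : ι → Q'), a * (⨆ k, f k) = ⨆ k, a * f k := by
    intro a f
    rw [iSup, hdistQ' a (Set.range f), iSup_range]
  refine ⟨?_, ?_, ?_⟩
  · intro S
    simp only [(hd _).1 S]
    rw [iSup_comm]
    exact iSup_congr fun a => iSup_comm
  · intro x
    obtain ⟨α⟩ := ‹Nonempty ι›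
    exact le_trans ((hd α).2.1 x) (le_iSup (fun β => d β x) α)
  · intro x y
    simp only [(fun α => (hd α).2.2 x y : ∀ α, d α (x * y) = i x * d α y ⊔ i y * d α x)]
    rw [hdist' (i x) (fun α => d α y), hdist' (i y) (fun α => d α x), iSup_sup_eq]
end
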